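/- Skew-symmetry of the Koopman–von Neumann generator on the zero-trace class: let ψ lie in the zero-trace PFS class with weak divergence g_ψ = div(ψF), and let φ ∈ L²(Ω) admit a weak divergence g_φ = div(φF) ∈ L²(Ω). Setting Kψ := −g_ψ + ½(div F)ψ and Kφ := −g_φ + ½(div F)φ, one has (Kψ, φ)_{L²(Ω)} = −(Kφ, ψ)_{L²(Ω)}. -/

import Mathlib

open MeasureTheory Filter

/-- The divergence of a vector field `F : ℝ^d → ℝ^d`, defined via partial derivatives. -/
noncomputable def divF {d : ℕ} (F : EuclideanSpace ℝ (Fin d) → EuclideanSpace ℝ (Fin d))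
    (x : EuclideanSpace ℝ (Fin d)) : ℝ :=
  ∑ j, fderiv ℝ F x (EuclideanSpace.single j 1) j

/-- `g ∈ L²` is the weak divergence of `ψ F` on `Ω`:
`∫_Ω ψ F·∇φ = -∫_Ω g φ` for all test functions `φ ∈ C_c^∞(Ω)`. -/
def IsWeakDiv {d : ℕ} (Ω : Set (EuclideanSpace ℝ (Fin d)))
    (F : EuclideanSpace ℝ (Fin d) → EuclideanSpace ℝ (Fin d))
    (ψ g : EuclideanSpace ℝ (Fin d) → ℝ) : Prop :=
  ∀ φ : EuclideanSpace ℝ (Fin d) → ℝ, ContDiff ℝ (⊤ : ℕ∞) φ → HasCompactSupport φ →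
    tsupport φ ⊆ Ω →
    ∫ x in Ω, ψ x * ∑ j, F x j * fderiv ℝ φ x (EuclideanSpace.single j 1) =
      - ∫ x in Ω, g x * φ x

/-- `ψ` lies in the zero-trace PFS class with weak divergence `g = div(ψF)`:
there is a sequence `ψ_n ∈ C_c^∞(Ω)` with `ψ_n → ψ` in `L²(Ω)` and
`F·∇ψ_n + (div F) ψ_n → g` in `L²(Ω)`. -/
def InZeroTracePFS {d : ℕ} (Ω : Set (EuclideanSpace ℝ (Fin d)))
    (F : EuclideanSpace ℝ (Fin d) → EuclideanSpace ℝ (Fin d))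
    (ψ g : EuclideanSpace ℝ (Fin d) → ℝ) : Prop :=
  IsWeakDiv Ω F ψ g ∧
  ∃ ψn : ℕ → EuclideanSpace ℝ (Fin d) → ℝ,
    (∀ n, ContDiff ℝ (⊤ : ℕ∞) (ψn n) ∧ HasCompactSupport (ψn n) ∧ tsupport (ψn n) ⊆ Ω) ∧
    Tendsto (fun n => ∫ x in Ω, (ψn n x - ψ x) ^ 2) atTop (nhds 0) ∧
    Tendsto (fun n => ∫ x in Ω,
        ((∑ j, F x j * fderiv ℝ (ψn n) x (EuclideanSpace.single j 1)) +
          divF F x * ψn n x - g x) ^ 2) atTop (nhds 0)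


private lemma integrable_mul_of_memL2 {α : Type*} {m : MeasurableSpace α} {μ : Measure α}
    {f g : α → ℝ} (hf : MemLp f 2 μ) (hg : MemLp g 2 μ) :
    Integrable (fun x => f x * g x) μ := by
  have h := L2.integrable_inner (𝕜 := ℝ) (hf.toLp f) (hg.toLp g)
  apply h.congr
  filter_upwards [hf.coeFn_toLp, hg.coeFn_toLp] with x h1 h2
  simp [h1, h2, RCLike.inner_apply, mul_comm]

private lemma abs_integral_mul_le {α : Type*} {m : MeasurableSpace α} {μ : Measure α}
    {f g : α → ℝ} (hf : MemLp f 2 μ) (hg : MemLp g 2 μ) :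
    |∫ x, f x * g x ∂μ| ≤ Real.sqrt (∫ x, f x ^ 2 ∂μ) * Real.sqrt (∫ x, g x ^ 2 ∂μ) := by
  set F := hf.toLp f
  set G := hg.toLp g
  have hFG : ∫ x, f x * g x ∂μ = inner (𝕜 := ℝ) F G := by
    rw [L2.inner_def]
    apply integral_congr_ae
    filter_upwards [hf.coeFn_toLp, hg.coeFn_toLp] with x h1 h2
    simp [F, G, h1, h2, RCLike.inner_apply, mul_comm]
  have hF : ∫ x, f x ^ 2 ∂μ = ‖F‖ ^ 2 := by
    rw [← real_inner_self_eq_norm_sq, L2.inner_def]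
    apply integral_congr_ae
    filter_upwards [hf.coeFn_toLp] with x h1
    simp [F, h1, RCLike.inner_apply]
  have hG : ∫ x, g x ^ 2 ∂μ = ‖G‖ ^ 2 := by
    rw [← real_inner_self_eq_norm_sq, L2.inner_def]
    apply integral_congr_ae
    filter_upwards [hg.coeFn_toLp] with x h1
    simp [G, h1, RCLike.inner_apply]
  rw [hFG, hF, hG, Real.sqrt_sq (norm_nonneg _), Real.sqrt_sq (norm_nonneg _)]
  exact abs_real_inner_le_norm F G

private lemma tendsto_integral_mul {α : Type*} {m : MeasurableSpace α} {μ : Measure α}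
    {fn : ℕ → α → ℝ} {f h : α → ℝ}
    (hfn : ∀ n, MemLp (fn n) 2 μ) (hf : MemLp f 2 μ) (hh : MemLp h 2 μ)
    (hconv : Tendsto (fun n => ∫ x, (fn n x - f x) ^ 2 ∂μ) atTop (nhds 0)) :
    Tendsto (fun n => ∫ x, fn n x * h x ∂μ) atTop (nhds (∫ x, f x * h x ∂μ)) := by
  rw [← tendsto_sub_nhds_zero_iff]
  have hb : Tendsto (fun n => Real.sqrt (∫ x, (fn n x - f x) ^ 2 ∂μ)
      * Real.sqrt (∫ x, h x ^ 2 ∂μ)) atTop (nhds 0) := by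
    have h1 := (Real.continuous_sqrt.tendsto 0).comp hconv
    simpa using h1.mul_const (Real.sqrt (∫ x, h x ^ 2 ∂μ))
  apply squeeze_zero_norm _ hb
  intro n
  have hsub : MemLp (fun x => fn n x - f x) 2 μ := (hfn n).sub hf
  have heq : ∫ x, fn n x * h x ∂μ - ∫ x, f x * h x ∂μ
      = ∫ x, (fn n x - f x) * h x ∂μ := by
    rw [← integral_sub (integrable_mul_of_memL2 (hfn n) hh) (integrable_mul_of_memL2 hf hh)]
    congr 1
    funext x
    ring
  rw [Real.norm_eq_abs, heq]
  exact abs_integral_mul_le hsub hh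

/-- Skew-symmetry of the Koopman–von Neumann generator on the
zero-trace class: with `Kψ := −g_ψ + ½(div F)ψ` and `Kφ := −g_φ + ½(div F)φ`,
`(Kψ, φ)_{L²(Ω)} = −(Kφ, ψ)_{L²(Ω)}`. -/
theorem kvn_skew_symmetric
    (d : ℕ) (hd : 1 ≤ d)
    (Ω : Set (EuclideanSpace ℝ (Fin d)))
    (hΩo : IsOpen Ω) (hΩb : Bornology.IsBounded Ω) (hΩne : Ω.Nonempty)
    (F : EuclideanSpace ℝ (Fin d) → EuclideanSpace ℝ (Fin d))
    (U : Set (EuclideanSpace ℝ (Fin d)))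
    (hUo : IsOpen U) (hUΩ : closure Ω ⊆ U) (hFC1 : ContDiffOn ℝ 1 F U)
    (ψ gψ φ gφ : EuclideanSpace ℝ (Fin d) → ℝ)
    (hψ : MemLp ψ 2 (volume.restrict Ω)) (hgψ : MemLp gψ 2 (volume.restrict Ω))
    (hφ : MemLp φ 2 (volume.restrict Ω)) (hgφ : MemLp gφ 2 (volume.restrict Ω))
    (hzt : InZeroTracePFS Ω F ψ gψ) (hwφ : IsWeakDiv Ω F φ gφ) :
    ∫ x in Ω, (-gψ x + (1 / 2) * divF F x * ψ x) * φ x =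
      - ∫ x in Ω, (-gφ x + (1 / 2) * divF F x * φ x) * ψ x := by
  classical
  obtain ⟨hwψ, ψn, hψnprop, hψnL2, hgL2⟩ := hzt
  have hΩm : MeasurableSet Ω := hΩo.measurableSet
  haveI : IsFiniteMeasure (volume.restrict Ω) := by
    constructor
    rw [Measure.restrict_apply_univ]
    obtain ⟨R, hR⟩ := hΩb.subset_closedBall 0
    exact lt_of_le_of_lt (measure_mono hR) measure_closedBall_lt_top
  have hK : IsCompact (closure Ω) := hΩb.isCompact_closure
  have hsubU : Ω ⊆ U := subset_closure.trans hUΩ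
  have hFc : ContinuousOn F U := hFC1.continuousOn
  have hF' : ContinuousOn (fderiv ℝ F) U := hFC1.continuousOn_fderiv_of_isOpen hUo le_rfl
  have hDc : ContinuousOn (divF F) U := by
    show ContinuousOn (fun x => ∑ j, fderiv ℝ F x (EuclideanSpace.single j 1) j) U
    apply continuousOn_finset_sum
    intro j _
    have h2 : Continuous fun (L : EuclideanSpace ℝ (Fin d) →L[ℝ] EuclideanSpace ℝ (Fin d)) =>
        L (EuclideanSpace.single j 1) j :=
      (EuclideanSpace.proj j).continuous.comp
        (ContinuousLinearMap.apply ℝ (EuclideanSpace ℝ (Fin d))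
          (EuclideanSpace.single j 1)).continuous
    exact h2.comp_continuousOn hF'
  obtain ⟨CD, hCD⟩ := hK.exists_bound_of_continuousOn (hDc.mono hUΩ)
  have hDaesm : AEStronglyMeasurable (divF F) (volume.restrict Ω) :=
    (hDc.mono hsubU).aestronglyMeasurable hΩm
  have hDbd : ∀ᵐ x ∂(volume.restrict Ω), ‖divF F x‖ ≤ CD :=
    (ae_restrict_iff' hΩm).2 (Filter.Eventually.of_forall fun x hx => hCD x (subset_closure hx))
  have hDmul : ∀ {h : EuclideanSpace ℝ (Fin d) → ℝ}, MemLp h 2 (volume.restrict Ω) →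
      MemLp (fun x => divF F x * h x) 2 (volume.restrict Ω) := by
    intro h hh
    refine hh.of_le_mul (c := CD) (hDaesm.mul hh.aestronglyMeasurable) ?_
    filter_upwards [hDbd] with x hx
    rw [norm_mul]
    exact mul_le_mul_of_nonneg_right hx (norm_nonneg _)
  have hDφ2 : MemLp (fun x => divF F x * φ x) 2 (volume.restrict Ω) := hDmul hφ
  have hψnC : ∀ n, ContDiff ℝ (⊤ : ℕ∞) (ψn n) := fun n => (hψnprop n).1
  have hψncs : ∀ n, HasCompactSupport (ψn n) := fun n => (hψnprop n).2.1
  have hψnsupp : ∀ n, tsupport (ψn n) ⊆ Ω := fun n => (hψnprop n).2.2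
  have hψn2 : ∀ n, MemLp (ψn n) 2 (volume.restrict Ω) := by
    intro n
    obtain ⟨C, hC⟩ := hK.exists_bound_of_continuousOn (hψnC n).continuous.continuousOn
    exact MemLp.of_bound (hψnC n).continuous.aestronglyMeasurable C
      ((ae_restrict_iff' hΩm).2 (Filter.Eventually.of_forall fun x hx => hC x (subset_closure hx)))
  have hBc : ∀ n, ContinuousOn
      (fun x => ∑ j, F x j * fderiv ℝ (ψn n) x (EuclideanSpace.single j 1)) U := by
    intro n
    apply continuousOn_finset_sum
    intro j _
    have h1 : ContinuousOn (fun x => F x j) U :=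
      (EuclideanSpace.proj j).continuous.comp_continuousOn hFc
    have h2 : Continuous (fun x => fderiv ℝ (ψn n) x (EuclideanSpace.single j 1)) :=
      (ContinuousLinearMap.apply ℝ ℝ (EuclideanSpace.single j 1)).continuous.comp
        ((hψnC n).continuous_fderiv (by simp))
    exact h1.mul h2.continuousOn
  have hB2 : ∀ n, MemLp
      (fun x => ∑ j, F x j * fderiv ℝ (ψn n) x (EuclideanSpace.single j 1)) 2
      (volume.restrict Ω) := by
    intro n
    obtain ⟨C, hC⟩ := hK.exists_bound_of_continuousOn ((hBc n).mono hUΩ)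
    exact MemLp.of_bound (((hBc n).mono hsubU).aestronglyMeasurable hΩm) C
      ((ae_restrict_iff' hΩm).2 (Filter.Eventually.of_forall fun x hx => hC x (subset_closure hx)))
  have hfn2 : ∀ n, MemLp
      (fun x => (∑ j, F x j * fderiv ℝ (ψn n) x (EuclideanSpace.single j 1))
        + divF F x * ψn n x) 2 (volume.restrict Ω) :=
    fun n => (hB2 n).add (hDmul (hψn2 n))
  -- limits
  have claim1 : Tendsto (fun n => ∫ x in Ω,
      ((∑ j, F x j * fderiv ℝ (ψn n) x (EuclideanSpace.single j 1)) + divF F x * ψn n x) * φ x)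
      atTop (nhds (∫ x in Ω, gψ x * φ x)) :=
    tendsto_integral_mul hfn2 hgψ hφ hgL2
  have claim2 : Tendsto (fun n => ∫ x in Ω, ψn n x * gφ x) atTop
      (nhds (∫ x in Ω, ψ x * gφ x)) :=
    tendsto_integral_mul hψn2 hψ hgφ hψnL2
  have claim3 : Tendsto (fun n => ∫ x in Ω, ψn n x * (divF F x * φ x)) atTop
      (nhds (∫ x in Ω, ψ x * (divF F x * φ x))) :=
    tendsto_integral_mul hψn2 hψ hDφ2 hψnL2
  -- identity for each n, from the weak divergence of φF
  have hAn : ∀ n, (∫ x in Ω,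
      ((∑ j, F x j * fderiv ℝ (ψn n) x (EuclideanSpace.single j 1)) + divF F x * ψn n x) * φ x)
      = -(∫ x in Ω, ψn n x * gφ x) + ∫ x in Ω, ψn n x * (divF F x * φ x) := by
    intro n
    have hi1 : Integrable
        (fun x => φ x * ∑ j, F x j * fderiv ℝ (ψn n) x (EuclideanSpace.single j 1))
        (volume.restrict Ω) := integrable_mul_of_memL2 hφ (hB2 n)
    have hi2 : Integrable (fun x => ψn n x * (divF F x * φ x)) (volume.restrict Ω) :=
      integrable_mul_of_memL2 (hψn2 n) hDφ2
    have e1 : (∫ x in Ω,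
        ((∑ j, F x j * fderiv ℝ (ψn n) x (EuclideanSpace.single j 1)) + divF F x * ψn n x) * φ x)
        = (∫ x in Ω, φ x * ∑ j, F x j * fderiv ℝ (ψn n) x (EuclideanSpace.single j 1))
          + ∫ x in Ω, ψn n x * (divF F x * φ x) := by
      rw [← integral_add hi1 hi2]
      apply integral_congr_ae
      filter_upwards with x
      ring
    have e2 : ∫ x in Ω, gφ x * ψn n x = ∫ x in Ω, ψn n x * gφ x :=
      integral_congr_ae (Filter.Eventually.of_forall fun x => mul_comm _ _)
    rw [e1, hwφ (ψn n) (hψnC n) (hψncs n) (hψnsupp n), e2]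
  have key : ∫ x in Ω, gψ x * φ x
      = -(∫ x in Ω, ψ x * gφ x) + ∫ x in Ω, ψ x * (divF F x * φ x) := by
    refine tendsto_nhds_unique claim1 ?_
    have : (fun n => ∫ x in Ω,
        ((∑ j, F x j * fderiv ℝ (ψn n) x (EuclideanSpace.single j 1)) + divF F x * ψn n x) * φ x)
        = fun n => -(∫ x in Ω, ψn n x * gφ x) + ∫ x in Ω, ψn n x * (divF F x * φ x) :=
      funext hAn
    rw [this]
    exact claim2.neg.add claim3
  -- final algebra
  have igψφ : Integrable (fun x => gψ x * φ x) (volume.restrict Ω) :=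
    integrable_mul_of_memL2 hgψ hφ
  have iψgφ : Integrable (fun x => ψ x * gφ x) (volume.restrict Ω) :=
    integrable_mul_of_memL2 hψ hgφ
  have iψDφ : Integrable (fun x => ψ x * (divF F x * φ x)) (volume.restrict Ω) :=
    integrable_mul_of_memL2 hψ hDφ2
  have elhs : (∫ x in Ω, (-gψ x + (1 / 2) * divF F x * ψ x) * φ x)
      = -(∫ x in Ω, gψ x * φ x) + (1 / 2) * ∫ x in Ω, ψ x * (divF F x * φ x) := by
    calc (∫ x in Ω, (-gψ x + (1 / 2) * divF F x * ψ x) * φ x)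
        = ∫ x in Ω, (-(gψ x * φ x) + (1 / 2) * (ψ x * (divF F x * φ x))) := by
          apply integral_congr_ae
          filter_upwards with x
          ring
      _ = (∫ x in Ω, -(gψ x * φ x)) + ∫ x in Ω, (1 / 2) * (ψ x * (divF F x * φ x)) :=
          integral_add igψφ.neg' (iψDφ.const_mul (1 / 2))
      _ = -(∫ x in Ω, gψ x * φ x) + (1 / 2) * ∫ x in Ω, ψ x * (divF F x * φ x) := by
          rw [integral_neg, integral_const_mul]
  have erhs : (∫ x in Ω, (-gφ x + (1 / 2) * divF F x * φ x) * ψ x)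
      = -(∫ x in Ω, ψ x * gφ x) + (1 / 2) * ∫ x in Ω, ψ x * (divF F x * φ x) := by
    calc (∫ x in Ω, (-gφ x + (1 / 2) * divF F x * φ x) * ψ x)
        = ∫ x in Ω, (-(ψ x * gφ x) + (1 / 2) * (ψ x * (divF F x * φ x))) := by
          apply integral_congr_ae
          filter_upwards with x
          ring
      _ = (∫ x in Ω, -(ψ x * gφ x)) + ∫ x in Ω, (1 / 2) * (ψ x * (divF F x * φ x)) :=
          integral_add iψgφ.neg' (iψDφ.const_mul (1 / 2))
      _ = -(∫ x in Ω, ψ x * gφ x) + (1 / 2) * ∫ x in Ω, ψ x * (divF F x * φ x) := by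
          rw [integral_neg, integral_const_mul]
  rw [elhs, erhs, key]
  ring
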